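/- In R₂: (i) the left annihilator of s is lan(s) = R̂s, where R̂ = ℤ1 ⊕ R₂; (ii) the right annihilator of R₂ is zero: if s·u = t·u = 0 then u = 0. -/
import Mathlib


/-!
The tree-indexed vector space `V` over `ℚ` with basis the free monoid on two letters
(encoded as `List Bool`, with `false` the letter `0` and `true` the letter `1`).
The recursive matrices `s = [[0,0],[1,0]]` and `t = [[0,t],[0,s]]` of the ring `R₂`
act on the decomposition `V = ℚ·φ ⊕ 0V ⊕ 1V` by the block-matrix recursion.
-/

noncomputable section

abbrev V : Type := List Bool →₀ ℚ

/-- Prefixing by a letter: the embedding `V → yV`. -/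
def pre (b : Bool) : V →ₗ[ℚ] V := Finsupp.lmapDomain ℚ ℚ (List.cons b)

/-- Value of `s = [[0,0],[1,0]]` on a basis word. -/
def Sfun : List Bool → V
  | [] => 0
  | false :: u => Finsupp.single (true :: u) 1
  | true :: _ => 0

/-- Value of `t = [[0,t],[0,s]]` on a basis word, by recursion. -/
def Tfun : List Bool → V
  | [] => 0
  | false :: _ => 0
  | true :: u => pre false (Tfun u) + pre true (Sfun u)

/-- The generator `s` of `R₂`. -/
def sR : Module.End ℚ V := Finsupp.linearCombination ℚ Sfun

/-- The generator `t` of `R₂`. -/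
def tR : Module.End ℚ V := Finsupp.linearCombination ℚ Tfun

/-- The level-preserving operator with block form `[[e,0,0],[0,A,B],[0,C,D]]` on
`V = ℚ·φ ⊕ 0V ⊕ 1V`, written `e ⊕ [[A,B],[C,D]]`. -/
def blk (e : ℚ) (A B C D : Module.End ℚ V) : Module.End ℚ V :=
  Finsupp.linearCombination ℚ (fun w => match w with
    | [] => Finsupp.single ([] : List Bool) e
    | false :: u => pre false (A (Finsupp.single u 1)) + pre true (C (Finsupp.single u 1))
    | true :: u => pre false (B (Finsupp.single u 1)) + pre true (D (Finsupp.single u 1)))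

/-- The monomial in `s, t` given by a word (`false ↦ s`, `true ↦ t`). -/
def mono (w : List Bool) : Module.End ℚ V :=
  (w.map (fun b => if b then tR else sR)).prod

/-- The ring `R₂` generated by `s` and `t` (a non-unital subring of `End ℚ V`). -/
def R2 : NonUnitalSubring (Module.End ℚ V) := NonUnitalSubring.closure {sR, tR}

end

noncomputable section
open Finsupp

lemma pre_single (b : Bool) (u : List Bool) (c : ℚ) :
    pre b (Finsupp.single u c) = Finsupp.single (b :: u) c := by
  simp [pre, Finsupp.lmapDomain_apply, Finsupp.mapDomain_single]

lemma pre_apply_cons (b : Bool) (g : V) (z : List Bool) : pre b g (b :: z) = g z := by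
  simpa [pre, Finsupp.lmapDomain_apply] using
    Finsupp.mapDomain_apply (List.cons_injective) g z

lemma pre_apply_nil (b : Bool) (g : V) : pre b g [] = 0 := by
  rw [pre, Finsupp.lmapDomain_apply]
  exact Finsupp.mapDomain_notin_range _ _ (by simp)

lemma pre_apply_ne (b c : Bool) (h : b ≠ c) (g : V) (z : List Bool) :
    pre b g (c :: z) = 0 := by
  rw [pre, Finsupp.lmapDomain_apply]
  exact Finsupp.mapDomain_notin_range _ _ (by simp [eq_comm]; exact h)

lemma blk_nil (e : ℚ) (A B C D : Module.End ℚ V) :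
    blk e A B C D (Finsupp.single [] 1) = Finsupp.single ([] : List Bool) e := by
  simp [blk, Finsupp.linearCombination_single]

lemma blk_cons_false (e : ℚ) (A B C D : Module.End ℚ V) (u : List Bool) :
    blk e A B C D (Finsupp.single (false :: u) 1) =
      pre false (A (Finsupp.single u 1)) + pre true (C (Finsupp.single u 1)) := by
  simp [blk, Finsupp.linearCombination_single]

lemma blk_cons_true (e : ℚ) (A B C D : Module.End ℚ V) (u : List Bool) :
    blk e A B C D (Finsupp.single (true :: u) 1) =
      pre false (B (Finsupp.single u 1)) + pre true (D (Finsupp.single u 1)) := by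
  simp [blk, Finsupp.linearCombination_single]

lemma end_ext {f g : Module.End ℚ V}
    (h : ∀ w : List Bool, f (Finsupp.single w 1) = g (Finsupp.single w 1)) : f = g := by
  apply Finsupp.lhom_ext
  intro w c
  have : (Finsupp.single w c : V) = c • Finsupp.single w 1 := by simp
  rw [this, map_smul, map_smul, h]

lemma sR_single (w : List Bool) : sR (Finsupp.single w 1) = Sfun w := by
  simp [sR, Finsupp.linearCombination_single]

lemma tR_single (w : List Bool) : tR (Finsupp.single w 1) = Tfun w := by
  simp [tR, Finsupp.linearCombination_single]

lemma sR_eq : sR = blk 0 0 0 1 0 := by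
  apply end_ext
  intro w
  rcases w with _ | ⟨b, u⟩
  · simp [sR_single, Sfun, blk_nil]
  · cases b
    · simp [sR_single, Sfun, blk_cons_false, pre_single]
    · simp [sR_single, Sfun, blk_cons_true]

lemma tR_eq : tR = blk 0 0 tR 0 sR := by
  apply end_ext
  intro w
  rcases w with _ | ⟨b, u⟩
  · simp [tR_single, Tfun, blk_nil]
  · cases b
    · simp [tR_single, Tfun, blk_cons_false]
    · simp [tR_single, Tfun, blk_cons_true, sR_single]


lemma blk_pre_false (e : ℚ) (A B C D : Module.End ℚ V) (g : V) :
    blk e A B C D (pre false g) = pre false (A g) + pre true (C g) := by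
  have : (blk e A B C D).comp (pre false) =
      (pre false).comp A + (pre true).comp C := by
    apply end_ext
    intro u
    simp [pre_single, blk_cons_false]
  exact DFunLike.congr_fun this g

lemma blk_pre_true (e : ℚ) (A B C D : Module.End ℚ V) (g : V) :
    blk e A B C D (pre true g) = pre false (B g) + pre true (D g) := by
  have : (blk e A B C D).comp (pre true) =
      (pre false).comp B + (pre true).comp D := by
    apply end_ext
    intro u
    simp [pre_single, blk_cons_true]
  exact DFunLike.congr_fun this g

lemma blk_mul (e f : ℚ) (A B C D A' B' C' D' : Module.End ℚ V) :
    blk e A B C D * blk f A' B' C' D' =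
      blk (e * f) (A * A' + B * C') (A * B' + B * D')
        (C * A' + D * C') (C * B' + D * D') := by
  apply end_ext
  intro w
  rcases w with _ | ⟨b, u⟩
  · rw [Module.End.mul_apply, blk_nil, blk_nil]
    have h1 : (Finsupp.single ([] : List Bool) f : V) = f • Finsupp.single [] 1 := by
      rw [Finsupp.smul_single, smul_eq_mul, mul_one]
    rw [h1, map_smul, blk_nil, Finsupp.smul_single, smul_eq_mul, mul_comm]
  · cases b
    · simp only [Module.End.mul_apply, blk_cons_false, map_add, blk_pre_false, blk_pre_true]
      simp [Module.End.mul_apply, map_add]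
      abel
    · simp only [Module.End.mul_apply, blk_cons_true, map_add, blk_pre_false, blk_pre_true]
      simp [Module.End.mul_apply, map_add]
      abel

lemma blk_add (e f : ℚ) (A B C D A' B' C' D' : Module.End ℚ V) :
    blk e A B C D + blk f A' B' C' D' =
      blk (e + f) (A + A') (B + B') (C + C') (D + D') := by
  apply end_ext
  intro w
  rcases w with _ | ⟨b, u⟩
  · simp [blk_nil, Finsupp.single_add]
  · cases b
    · simp [blk_cons_false, map_add]
      abel
    · simp [blk_cons_true, map_add]
      abel

lemma blk_neg (e : ℚ) (A B C D : Module.End ℚ V) :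
    -blk e A B C D = blk (-e) (-A) (-B) (-C) (-D) := by
  apply end_ext
  intro w
  rcases w with _ | ⟨b, u⟩
  · simp [blk_nil, Finsupp.single_neg]
  · cases b
    · simp [blk_cons_false, map_neg]
      abel
    · simp [blk_cons_true, map_neg]
      abel

lemma blk_zero : blk 0 0 0 0 0 = 0 := by
  apply end_ext
  intro w
  rcases w with _ | ⟨b, u⟩
  · simp [blk_nil]
  · cases b
    · simp [blk_cons_false]
    · simp [blk_cons_true]

lemma pre_add_eq_zero {g h : V} (hz : pre false g + pre true h = 0) : g = 0 ∧ h = 0 := by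
  constructor
  · ext z
    have := DFunLike.congr_fun hz (false :: z)
    simpa [Finsupp.add_apply, pre_apply_cons, pre_apply_ne true false (by simp)] using this
  · ext z
    have := DFunLike.congr_fun hz (true :: z)
    simpa [Finsupp.add_apply, pre_apply_cons, pre_apply_ne false true (by simp)] using this

lemma blk_eq_zero {A B C D : Module.End ℚ V} (h : blk 0 A B C D = 0) :
    A = 0 ∧ B = 0 ∧ C = 0 ∧ D = 0 := by
  have hf : ∀ u : List Bool, A (Finsupp.single u 1) = 0 ∧ C (Finsupp.single u 1) = 0 := by
    intro u
    have := DFunLike.congr_fun h (Finsupp.single (false :: u) 1)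
    rw [blk_cons_false] at this
    exact pre_add_eq_zero this
  have ht : ∀ u : List Bool, B (Finsupp.single u 1) = 0 ∧ D (Finsupp.single u 1) = 0 := by
    intro u
    have := DFunLike.congr_fun h (Finsupp.single (true :: u) 1)
    rw [blk_cons_true] at this
    exact pre_add_eq_zero this
  refine ⟨end_ext fun u => by simp [(hf u).1], end_ext fun u => by simp [(ht u).1],
    end_ext fun u => by simp [(hf u).2], end_ext fun u => by simp [(ht u).2]⟩


/-- Binary value of a word (first letter least significant). -/
def val : List Bool → ℕ
  | [] => 0
  | b :: u => (cond b 1 0) + 2 * val u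

lemma Sfun_val : ∀ u z : List Bool, val z ≤ val u → Sfun u z = 0 := by
  intro u z h
  match u with
  | [] => simp [Sfun]
  | true :: u' => simp [Sfun]
  | false :: u' =>
    have hz : z ≠ true :: u' := by
      intro hzz
      subst hzz
      simp only [val, cond_true, cond_false] at h
      omega
    rw [Sfun, Finsupp.single_apply, if_neg (fun hh => hz hh.symm)]

lemma Tfun_val : ∀ u z : List Bool, val z ≤ val u → Tfun u z = 0 := by
  intro u
  induction u with
  | nil => intro z h; simp [Tfun]
  | cons b u' ih =>
    intro z h
    cases b
    · simp [Tfun]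
    · rw [Tfun]
      rcases z with _ | ⟨c, z'⟩
      · simp [Finsupp.add_apply, pre_apply_nil]
      · simp only [Finsupp.add_apply]
        cases c
        · rw [pre_apply_cons, pre_apply_ne true false (by simp)]
          have : val z' ≤ val u' := by simp [val] at h; omega
          rw [ih z' this, add_zero]
        · rw [pre_apply_cons, pre_apply_ne false true (by simp)]
          have : val z' ≤ val u' := by simp [val] at h; omega
          rw [Sfun_val u' z' this, zero_add]

/-- The operator strictly increases the binary value on basis vectors. -/
def IncVal (x : Module.End ℚ V) : Prop :=
  ∀ u z : List Bool, val z ≤ val u → x (Finsupp.single u 1) z = 0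

lemma incVal_apply {x : Module.End ℚ V} (hx : IncVal x) {g : V} {n : ℕ}
    (hg : ∀ v, val v ≤ n → g v = 0) {z : List Bool} (hz : val z ≤ n) : x g z = 0 := by
  conv_lhs => rw [← Finsupp.sum_single g, map_finsuppSum, Finsupp.sum_apply]
  apply Finset.sum_eq_zero
  intro v hv
  have hcv : ¬ val v ≤ n := fun hle => (Finsupp.mem_support_iff.mp hv) (hg v hle)
  have hzv : val z ≤ val v := le_trans hz (le_of_not_ge hcv)
  have : (Finsupp.single v (g v) : V) = g v • Finsupp.single v 1 := by simp
  show x (Finsupp.single v (g v)) z = 0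
  rw [this, map_smul, Finsupp.smul_apply, hx v z hzv, smul_zero]

lemma incVal_R2 : ∀ x ∈ R2, IncVal x := by
  intro x hx
  induction hx using NonUnitalSubring.closure_induction with
  | mem y hy =>
    rcases hy with h | h
    · subst h; intro u z hz; rw [sR_single]; exact Sfun_val u z hz
    · subst h; intro u z hz; rw [tR_single]; exact Tfun_val u z hz
  | zero => intro u z _; simp
  | add a b _ _ pa pb => intro u z hz; simp [Finsupp.add_apply, pa u z hz, pb u z hz]
  | neg a _ pa => intro u z hz; simp [Finsupp.neg_apply, pa u z hz]
  | mul a b _ _ pa pb =>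
    intro u z hz
    rw [Module.End.mul_apply]
    exact incVal_apply pa (fun v hv => pb u v hv) hz

lemma killsPhi_R2 : ∀ x ∈ R2, x (Finsupp.single [] 1) = 0 := by
  intro x hx
  induction hx using NonUnitalSubring.closure_induction with
  | mem y hy =>
    rcases hy with h | h
    · subst h; rw [sR_single]; rfl
    · subst h; rw [tR_single]; rfl
  | zero => simp
  | add a b _ _ pa pb => simp [LinearMap.add_apply, pa, pb]
  | neg a _ pa => simp [LinearMap.neg_apply, pa]
  | mul a b _ _ pa pb => rw [Module.End.mul_apply, pb, map_zero]

lemma eval_sR_true (h : V) (u : List Bool) : sR h (true :: u) = h (false :: u) := by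
  have key : (Finsupp.lapply (M := ℚ) (R := ℚ) (true :: u)).comp sR
      = Finsupp.lapply (false :: u) := by
    apply Finsupp.lhom_ext
    intro v c
    rcases v with _ | ⟨b, v'⟩
    · have : sR (Finsupp.single [] c : V) = 0 := by
        have : (Finsupp.single ([] : List Bool) c : V) = c • Finsupp.single [] 1 := by simp
        rw [this, map_smul, sR_single]; simp [Sfun]
      simp [this, Finsupp.single_apply]
    · have hs : sR (Finsupp.single (b :: v') c : V) = c • Sfun (b :: v') := by
        have : (Finsupp.single (b :: v') c : V) = c • Finsupp.single (b :: v') 1 := by simp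
        rw [this, map_smul, sR_single]
      cases b
      · simp [hs, Sfun, Finsupp.single_apply, Finsupp.smul_apply, List.cons.injEq]
      · simp [hs, Sfun, Finsupp.single_apply, List.cons.injEq]
  exact DFunLike.congr_fun key h

lemma int_part_zero {n : ℤ} {y : Module.End ℚ V} (hy : y ∈ R2)
    (h : sR * ((n : ℤ) • 1 + y) = 0) : n = 0 := by
  have h1 := DFunLike.congr_fun h (Finsupp.single [false] 1)
  rw [Module.End.mul_apply] at h1
  have h2 := congrArg (fun g : V => g [true]) h1
  simp only [LinearMap.add_apply, LinearMap.smul_apply, Module.End.one_apply,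
    LinearMap.zero_apply, Finsupp.zero_apply] at h2
  rw [eval_sR_true] at h2
  have h3 : (n • Finsupp.single [false] (1:ℚ) + y (Finsupp.single [false] 1)) [false]
      = (n : ℚ) := by
    rw [Finsupp.add_apply, Finsupp.smul_apply, Finsupp.single_eq_same,
      incVal_R2 y hy [false] [false] le_rfl, add_zero]
    simp
  rw [h3] at h2
  exact_mod_cast h2


/-- The unitization `ℤ·1 + R₂`. -/
def Zhat (x : Module.End ℚ V) : Prop := ∃ n : ℤ, ∃ r ∈ R2, x = n • 1 + r

lemma Zhat_zero : Zhat 0 := ⟨0, 0, zero_mem _, by simp⟩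

lemma Zhat_one : Zhat 1 := ⟨1, 0, zero_mem _, by simp⟩

lemma Zhat_of_mem {x : Module.End ℚ V} (h : x ∈ R2) : Zhat x := ⟨0, x, h, by simp⟩

lemma Zhat_add {x y : Module.End ℚ V} (hx : Zhat x) (hy : Zhat y) : Zhat (x + y) := by
  obtain ⟨n, r, hr, rfl⟩ := hx
  obtain ⟨m, q, hq, rfl⟩ := hy
  exact ⟨n + m, r + q, add_mem hr hq, by rw [add_smul]; abel⟩

lemma Zhat_neg {x : Module.End ℚ V} (hx : Zhat x) : Zhat (-x) := by
  obtain ⟨n, r, hr, rfl⟩ := hx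
  exact ⟨-n, -r, neg_mem hr, by rw [neg_smul]; abel⟩

lemma Zhat_mul {x y : Module.End ℚ V} (hx : Zhat x) (hy : Zhat y) : Zhat (x * y) := by
  obtain ⟨n, r, hr, rfl⟩ := hx
  obtain ⟨m, q, hq, rfl⟩ := hy
  refine ⟨n * m, n • q + m • r + r * q, ?_, ?_⟩
  · exact add_mem (add_mem (zsmul_mem hq n) (zsmul_mem hr m)) (mul_mem hr hq)
  · have hcomm : r * ((m : ℤ) : Module.End ℚ V) = ((m : ℤ) : Module.End ℚ V) * r :=
      (Int.commute_cast r m).eq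
    simp only [zsmul_eq_mul, Int.cast_mul, mul_one, mul_add, add_mul, hcomm, mul_assoc]
    abel

lemma blocks_R2 : ∀ x ∈ R2, ∃ A B C D : Module.End ℚ V,
    Zhat A ∧ Zhat B ∧ Zhat C ∧ Zhat D ∧ x = blk 0 A B C D := by
  intro x hx
  induction hx using NonUnitalSubring.closure_induction with
  | mem y hy =>
    rcases hy with h | h
    · exact ⟨0, 0, 1, 0, Zhat_zero, Zhat_zero, Zhat_one, Zhat_zero, by rw [h, sR_eq]⟩
    · refine ⟨0, tR, 0, sR, Zhat_zero,
        Zhat_of_mem (NonUnitalSubring.subset_closure (by simp)),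
        Zhat_zero, Zhat_of_mem (NonUnitalSubring.subset_closure (by simp)),
        by rw [show y = tR from h]; exact tR_eq⟩
  | zero => exact ⟨0, 0, 0, 0, Zhat_zero, Zhat_zero, Zhat_zero, Zhat_zero, blk_zero.symm⟩
  | add a b _ _ pa pb =>
    obtain ⟨A, B, C, D, hA, hB, hC, hD, rfl⟩ := pa
    obtain ⟨A', B', C', D', hA', hB', hC', hD', rfl⟩ := pb
    refine ⟨A + A', B + B', C + C', D + D', Zhat_add hA hA', Zhat_add hB hB',
      Zhat_add hC hC', Zhat_add hD hD', ?_⟩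
    rw [blk_add]; norm_num
  | neg a _ pa =>
    obtain ⟨A, B, C, D, hA, hB, hC, hD, rfl⟩ := pa
    refine ⟨-A, -B, -C, -D, Zhat_neg hA, Zhat_neg hB, Zhat_neg hC, Zhat_neg hD, ?_⟩
    rw [blk_neg]; norm_num
  | mul a b _ _ pa pb =>
    obtain ⟨A, B, C, D, hA, hB, hC, hD, rfl⟩ := pa
    obtain ⟨A', B', C', D', hA', hB', hC', hD', rfl⟩ := pb
    refine ⟨A * A' + B * C', A * B' + B * D', C * A' + D * C', C * B' + D * D',
      Zhat_add (Zhat_mul hA hA') (Zhat_mul hB hC'),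
      Zhat_add (Zhat_mul hA hB') (Zhat_mul hB hD'),
      Zhat_add (Zhat_mul hC hA') (Zhat_mul hD hC'),
      Zhat_add (Zhat_mul hC hB') (Zhat_mul hD hD'), ?_⟩
    rw [blk_mul]; norm_num

lemma right_ann_aux : ∀ w : List Bool, ∀ x ∈ R2, sR * x = 0 → tR * x = 0 →
    x (Finsupp.single w 1) = 0 := by
  intro w
  induction w with
  | nil => intro x hx _ _; exact killsPhi_R2 x hx
  | cons b u ih =>
    intro x hx hs ht
    obtain ⟨A, B, C, D, hA, hB, hC, hD, rfl⟩ := blocks_R2 x hx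
    rw [sR_eq, blk_mul] at hs
    rw [tR_eq, blk_mul] at ht
    simp only [zero_mul, mul_zero, one_mul, zero_add, add_zero, mul_one] at hs ht
    obtain ⟨-, -, hA0, hB0⟩ := blk_eq_zero hs
    obtain ⟨htC, htD, hsC, hsD⟩ := blk_eq_zero ht
    -- extract the integer parts of C and D
    obtain ⟨m, c, hc, rfl⟩ := hC
    obtain ⟨m', d, hd, rfl⟩ := hD
    have hm : m = 0 := int_part_zero hc hsC
    have hm' : m' = 0 := int_part_zero hd hsD
    subst hm
    subst hm'
    have hCc : ((0:ℤ) • (1 : Module.End ℚ V) + c) = c := by rw [zero_smul, zero_add]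
    have hDd : ((0:ℤ) • (1 : Module.End ℚ V) + d) = d := by rw [zero_smul, zero_add]
    rw [hCc] at htC hsC
    rw [hDd] at htD hsD
    cases b
    · rw [blk_cons_false, hA0, hCc, LinearMap.zero_apply, map_zero, zero_add,
        ih c hc hsC htC, map_zero]
    · rw [blk_cons_true, hB0, hDd, LinearMap.zero_apply, map_zero, zero_add,
        ih d hd hsD htD, map_zero]

lemma right_ann : ∀ x ∈ R2, sR * x = 0 → tR * x = 0 → x = 0 := by
  intro x hx hs ht
  apply end_ext
  intro w
  rw [right_ann_aux w x hx hs ht, LinearMap.zero_apply]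


/-- `σ : 1u ↦ 0u`, the partial inverse of `s`. -/
def sigR : Module.End ℚ V := blk 0 0 1 0 0

/-- `δ1`: the projection onto `1V`. -/
def del1 : Module.End ℚ V := blk 0 0 0 0 1

lemma s_mul_s : sR * sR = 0 := by
  rw [sR_eq, blk_mul]
  simp only [zero_mul, mul_zero, one_mul, mul_one, add_zero, zero_add]
  exact blk_zero

lemma s_mul_sig : sR * sigR = del1 := by
  rw [sR_eq, sigR, del1, blk_mul]
  simp only [zero_mul, mul_zero, one_mul, mul_one, add_zero, zero_add]

lemma t_mul_sig : tR * sigR = 0 := by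
  rw [tR_eq, sigR, blk_mul]
  simp only [zero_mul, mul_zero, one_mul, mul_one, add_zero, zero_add]
  exact blk_zero

lemma s_mul_del : sR * del1 = 0 := by
  rw [sR_eq, del1, blk_mul]
  simp only [zero_mul, mul_zero, one_mul, mul_one, add_zero, zero_add]
  exact blk_zero

lemma t_mul_del : tR * del1 = tR := by
  rw [tR_eq, del1, blk_mul]
  simp only [zero_mul, mul_zero, one_mul, mul_one, add_zero, zero_add]

lemma del_mul_s : del1 * sR = sR := by
  rw [sR_eq, del1, blk_mul]
  simp only [zero_mul, mul_zero, one_mul, mul_one, add_zero, zero_add]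

lemma leftA : ∀ w ∈ R2, (w * del1 ∈ R2) ∧ ∃ n : ℤ, ∃ r ∈ R2, w * sigR = n • del1 + r := by
  intro w hw
  induction hw using NonUnitalSubring.closure_induction with
  | mem y hy =>
    rcases hy with h | h
    · rw [show y = sR from h]
      exact ⟨by rw [s_mul_del]; exact zero_mem _,
        1, 0, zero_mem _, by rw [s_mul_sig, one_smul, add_zero]⟩
    · rw [show y = tR from h]
      refine ⟨by rw [t_mul_del]; exact NonUnitalSubring.subset_closure (by simp),
        0, 0, zero_mem _, by rw [t_mul_sig, zero_smul, add_zero]⟩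
  | zero => exact ⟨by rw [zero_mul]; exact zero_mem _, 0, 0, zero_mem _, by simp⟩
  | add a b ha hb pa pb =>
    obtain ⟨pa1, n, r, hr, hra⟩ := pa
    obtain ⟨pb1, m, q, hq, hrb⟩ := pb
    refine ⟨by rw [add_mul]; exact add_mem pa1 pb1, n + m, r + q, add_mem hr hq, ?_⟩
    rw [add_mul, hra, hrb, add_smul]
    abel
  | neg a ha pa =>
    obtain ⟨pa1, n, r, hr, hra⟩ := pa
    refine ⟨by rw [neg_mul a del1]; exact neg_mem pa1, -n, -r, neg_mem hr, ?_⟩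
    rw [neg_mul a sigR, hra, neg_smul, neg_add]
  | mul a b ha hb pa pb =>
    obtain ⟨pa1, n, r, hr, hra⟩ := pa
    obtain ⟨pb1, m, q, hq, hrb⟩ := pb
    refine ⟨by rw [mul_assoc]; exact mul_mem ha pb1,
      0, m • (a * del1) + a * q, ?_, ?_⟩
    · exact add_mem (zsmul_mem pa1 m) (mul_mem ha hq)
    · rw [mul_assoc, hrb, mul_add, mul_smul_comm, zero_smul, zero_add]

lemma factor {w : Module.End ℚ V} (h0 : w (Finsupp.single [] 1) = 0)
    (hs : w * sR = 0) : w = (w * sigR) * sR := by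
  apply end_ext
  intro u
  rcases u with _ | ⟨b, u⟩
  · rw [h0, Module.End.mul_apply, Module.End.mul_apply, sR_single]
    show (0 : V) = w (sigR (Sfun []))
    rw [show Sfun [] = 0 from rfl, map_zero, map_zero]
  · cases b
    · rw [Module.End.mul_apply, Module.End.mul_apply, sR_single,
        show Sfun (false :: u) = Finsupp.single (true :: u) 1 from rfl]
      rw [show sigR (Finsupp.single (true :: u) 1)
          = Finsupp.single (false :: u) 1 from ?_]
      · rw [sigR, blk_cons_true]
        simp [pre_single]
    · have h1 : (Finsupp.single (true :: u) 1 : V) = sR (Finsupp.single (false :: u) 1) := by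
        rw [sR_single]; rfl
      rw [Module.End.mul_apply, Module.End.mul_apply, sR_single,
        show Sfun (true :: u) = 0 from rfl, map_zero, map_zero, h1,
        ← Module.End.mul_apply, hs, LinearMap.zero_apply]


/-- In `R₂`: (i) the left annihilator of `s` is `R̂s = ℤs + R₂s`;
(ii) the right annihilator of `R₂` is zero: if `s·u = t·u = 0` for `u ∈ R₂`, then `u = 0`. -/
theorem annihilators :
    (∀ w ∈ R2, (w * sR = 0 ↔ ∃ n : ℤ, ∃ r ∈ R2, w = n • sR + r * sR)) ∧
    (∀ u ∈ R2, sR * u = 0 → tR * u = 0 → u = 0) := by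
  constructor
  · intro w hw
    constructor
    · intro hws
      obtain ⟨-, n, r, hr, hsig⟩ := leftA w hw
      refine ⟨n, r, hr, ?_⟩
      rw [factor (killsPhi_R2 w hw) hws, hsig, add_mul, smul_mul_assoc, del_mul_s]
    · rintro ⟨n, r, hr, rfl⟩
      rw [add_mul, smul_mul_assoc, mul_assoc, s_mul_s, smul_zero, mul_zero, add_zero]
  · exact right_ann

end
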